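/- For fixed α > 0, fixed t ∈ ℝ, and fixed nonnegative integer M, as N → ∞ one has (1 + 2α²t/(2N - α²))^N = e^{α²t}·(∑_{q=0}^{M} G_q(t)·(α²/N)^q + O(N^{-M-1})), where G_0(t) = 1 and for q ≥ 1, G_q(t) = ∑_{k=1}^{q} (α^{2k}/(2^{q+k}·k!)) · ∑_{j_1+⋯+j_k=q, j_i≥1} ∏_{s=1}^{k} (1 - (1-2t)^{j_s+1})/(j_s+1). -/

import Mathlib

open Finset Filter Asymptotics

/-- Compositions of `q` into `k` positive parts. -/
noncomputable def compositions (k q : ℕ) : Finset (Fin k → ℕ) :=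
  (Finset.Nat.antidiagonalTuple k q).filter fun c => ∀ s, 1 ≤ c s

/-- The coefficients `G_q(t)`. -/
noncomputable def Gcoef (α t : ℝ) : ℕ → ℝ
  | 0 => 1
  | q + 1 =>
      ∑ k ∈ Finset.Icc 1 (q + 1),
        (α ^ (2 * k) / (2 ^ (q + 1 + k) * (Nat.factorial k : ℝ))) *
          ∑ c ∈ compositions k (q + 1),
            ∏ s, (1 - (1 - 2 * t) ^ (c s + 1)) / (c s + 1)


noncomputable def compSum (g : ℕ → ℝ) (k q : ℕ) : ℝ :=
  ∑ c ∈ Finset.Nat.antidiagonalTuple k q, ∏ i, g (c i)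

theorem compSum_zero (g : ℕ → ℝ) (q : ℕ) :
    compSum g 0 q = if q = 0 then 1 else 0 := by
  cases q <;> simp [compSum]

theorem compSum_succ (g : ℕ → ℝ) (k q : ℕ) :
    compSum g (k+1) q = ∑ p ∈ Finset.HasAntidiagonal.antidiagonal q, g p.1 * compSum g k p.2 := by
  unfold compSum
  simp_rw [Finset.mul_sum]
  rw [Finset.sum_sigma' (Finset.HasAntidiagonal.antidiagonal q)
    (fun p => Finset.Nat.antidiagonalTuple k p.2) (fun p c => g p.1 * ∏ i, g (c i))]
  refine Finset.sum_nbij' (fun c => ⟨(c 0, ∑ i, Fin.tail c i), Fin.tail c⟩)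
    (fun x => Fin.cons x.1.1 x.2) ?_ ?_ ?_ ?_ ?_
  · intro c hc
    rw [Finset.Nat.mem_antidiagonalTuple] at hc
    simp only [Finset.mem_sigma, Finset.HasAntidiagonal.mem_antidiagonal,
      Finset.Nat.mem_antidiagonalTuple, and_true]
    rw [← hc, ← Fin.sum_cons (c 0) (Fin.tail c), Fin.cons_self_tail]
  · rintro ⟨⟨i, j⟩, c⟩ h
    simp only [Finset.mem_sigma, Finset.HasAntidiagonal.mem_antidiagonal,
      Finset.Nat.mem_antidiagonalTuple] at h ⊢
    rw [Fin.sum_cons, h.2, h.1]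
  · intro c hc
    simp [Fin.cons_self_tail]
  · rintro ⟨⟨i, j⟩, c⟩ h
    simp only [Finset.mem_sigma, Finset.HasAntidiagonal.mem_antidiagonal,
      Finset.Nat.mem_antidiagonalTuple] at h
    simp only [Fin.cons_zero, Fin.tail_cons]
    exact Sigma.ext (by simp [h.2]) (by simp)
  · intro c hc
    rw [← Fin.prod_cons (g (c 0)) (fun i => g (Fin.tail c i))]
    exact Finset.prod_congr rfl fun i _ => by
      cases i using Fin.cases <;> simp [Fin.tail]

theorem compSum_abs_le (g : ℕ → ℝ) (k q : ℕ) :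
    |compSum g k q| ≤ compSum (fun j => |g j|) k q := by
  refine (Finset.abs_sum_le_sum_abs _ _).trans_eq (Finset.sum_congr rfl fun c _ => ?_)
  rw [Finset.abs_prod]

theorem compSum_nonneg {g : ℕ → ℝ} (hg : ∀ j, 0 ≤ g j) (k q : ℕ) :
    0 ≤ compSum g k q :=
  Finset.sum_nonneg fun c _ => Finset.prod_nonneg fun i _ => hg _

theorem compSum_mul_pow (g : ℕ → ℝ) (x : ℝ) (k q : ℕ) :
    compSum (fun j => g j * x ^ j) k q = compSum g k q * x ^ q := by
  rw [compSum, compSum, Finset.sum_mul]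
  refine Finset.sum_congr rfl fun c hc => ?_
  rw [Finset.Nat.mem_antidiagonalTuple] at hc
  rw [Finset.prod_mul_distrib, ← hc, ← Finset.prod_pow_eq_pow_sum]

theorem compSum_eq_zero_of_lt {g : ℕ → ℝ} (hg0 : g 0 = 0) {k q : ℕ} (h : q < k) :
    compSum g k q = 0 := by
  refine Finset.sum_eq_zero fun c hc => ?_
  rw [Finset.Nat.mem_antidiagonalTuple] at hc
  by_contra hne
  have : ∀ i, 1 ≤ c i := by
    intro i
    rcases Nat.eq_zero_or_pos (c i) with h0 | h1
    · exact absurd (Finset.prod_eq_zero (Finset.mem_univ i) (by rw [h0, hg0])) hne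
    · exact h1
  have : (k : ℕ) ≤ q := by
    calc (k : ℕ) = ∑ _i : Fin k, 1 := by simp
    _ ≤ ∑ i, c i := Finset.sum_le_sum fun i _ => this i
    _ = q := hc
  omega

theorem compSum_summable_tsum {g : ℕ → ℝ} (hg : Summable fun j => ‖g j‖) (k : ℕ) :
    (Summable fun q => ‖compSum g k q‖) ∧ (∑' q, compSum g k q) = (∑' j, g j) ^ k := by
  induction k with
  | zero =>
    constructor
    · apply summable_of_ne_finset_zero (s := {(0:ℕ)})
      intro q hq
      simp only [Finset.mem_singleton] at hq
      simp [compSum_zero, hq]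
    · simp only [compSum_zero, pow_zero]
      rw [tsum_ite_eq]
  | succ k ih =>
    constructor
    · simp only [compSum_succ]
      exact summable_norm_sum_mul_antidiagonal_of_summable_norm hg ih.1
    · simp only [compSum_succ]
      rw [← tsum_mul_tsum_eq_tsum_sum_antidiagonal_of_summable_norm hg ih.1,
        ih.2, pow_succ']

noncomputable def bfun (g : ℕ → ℝ) (q : ℕ) : ℝ :=
  ∑ k ∈ Finset.range (q+1), compSum g k q / (Nat.factorial k : ℝ)

theorem bfun_abs_le (g : ℕ → ℝ) (q : ℕ) :
    |bfun g q| ≤ bfun (fun j => |g j|) q := by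
  refine (Finset.abs_sum_le_sum_abs _ _).trans (Finset.sum_le_sum fun k _ => ?_)
  rw [abs_div, abs_of_nonneg (by positivity : (0:ℝ) ≤ (Nat.factorial k : ℝ)),
    div_le_div_iff_of_pos_right (by positivity : (0:ℝ) < (Nat.factorial k : ℝ))]
  exact compSum_abs_le g k q

theorem bfun_nonneg {g : ℕ → ℝ} (hpos : ∀ j, 0 ≤ g j) (q : ℕ) : 0 ≤ bfun g q :=
  Finset.sum_nonneg fun k _ => div_nonneg (compSum_nonneg hpos k q) (by positivity)

theorem hasSum_bfun {g : ℕ → ℝ} (hg : Summable fun j => ‖g j‖) (hg0 : g 0 = 0) :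
    HasSum (fun q => bfun g q) (Real.exp (∑' j, g j)) := by
  have hG : Summable fun j => ‖(|g j|)‖ := by simpa using hg
  have hGnn : ∀ k q, 0 ≤ compSum (fun j => |g j|) k q :=
    fun k q => compSum_nonneg (fun j => abs_nonneg _) k q
  have hFaq : ∀ k, Summable fun q =>
      compSum (fun j => |g j|) k q / (Nat.factorial k : ℝ) := by
    intro k
    have := (compSum_summable_tsum hG k).1
    simp only [Real.norm_eq_abs, abs_of_nonneg (hGnn k _)] at this
    exact this.div_const _
  have hFa : Summable (fun p : ℕ × ℕ =>
      compSum (fun j => |g j|) p.1 p.2 / (Nat.factorial p.1 : ℝ)) := by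
    refine (summable_prod_of_nonneg ?_).mpr ⟨fun k => hFaq k, ?_⟩
    · intro p
      exact div_nonneg (hGnn p.1 p.2) (by positivity)
    · refine Summable.congr
        (Real.summable_pow_div_factorial (∑' j, |g j|)) fun k => ?_
      show (∑' j, |g j|) ^ k / (Nat.factorial k : ℝ)
        = ∑' q, compSum (fun j => |g j|) k q / (Nat.factorial k : ℝ)
      rw [tsum_div_const, (compSum_summable_tsum hG k).2]
  have hF : Summable (fun p : ℕ × ℕ =>
      compSum g p.1 p.2 / (Nat.factorial p.1 : ℝ)) := by
    refine hFa.of_norm_bounded fun p => ?_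
    simp only [norm_div, Real.norm_eq_abs,
      abs_of_nonneg (by positivity : (0:ℝ) ≤ (Nat.factorial p.1 : ℝ))]
    rw [div_le_div_iff_of_pos_right (by positivity : (0:ℝ) < (Nat.factorial p.1 : ℝ))]
    exact compSum_abs_le g p.1 p.2
  have hswap : ∑' q, ∑' k, compSum g k q / (Nat.factorial k : ℝ)
      = ∑' k, ∑' q, compSum g k q / (Nat.factorial k : ℝ) :=
    Summable.tsum_comm (f := fun k q => compSum g k q / (Nat.factorial k : ℝ)) hF
  have key : ∑' q, ∑' k, compSum g k q / (Nat.factorial k : ℝ)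
      = Real.exp (∑' j, g j) := by
    rw [hswap]
    have h1 : ∀ k : ℕ, ∑' q, compSum g k q / (Nat.factorial k : ℝ)
        = (∑' j, g j) ^ k / (Nat.factorial k : ℝ) := by
      intro k
      rw [tsum_div_const, (compSum_summable_tsum hg k).2]
    rw [tsum_congr h1, Real.exp_eq_exp_ℝ, NormedSpace.exp_eq_tsum_div]
  have hinner : ∀ q, ∑' k, compSum g k q / (Nat.factorial k : ℝ) = bfun g q := by
    intro q
    rw [bfun]
    refine tsum_eq_sum fun k hk => ?_
    have hk' : q < k := by
      simp only [Finset.mem_range] at hk; omega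
    rw [compSum_eq_zero_of_lt hg0 hk', zero_div]
  have hsum : Summable (bfun g) := by
    have hnn : ∀ p : ℕ × ℕ,
        0 ≤ compSum (fun j => |g j|) p.2 p.1 / (Nat.factorial p.2 : ℝ) :=
      fun p => div_nonneg (hGnn _ _) (by positivity)
    have h2 : Summable (fun p : ℕ × ℕ =>
        compSum (fun j => |g j|) p.2 p.1 / (Nat.factorial p.2 : ℝ)) := by
      have := hFa.prod_symm
      exact this.congr fun p => rfl
    have h3 := (summable_prod_of_nonneg hnn).mp h2
    refine Summable.of_norm_bounded h3.2 fun q => ?_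
    have hb1 : ‖bfun g q‖ ≤ bfun (fun j => |g j|) q := bfun_abs_le g q
    refine hb1.trans ?_
    rw [bfun]
    refine Summable.sum_le_tsum (Finset.range (q+1)) (fun k _ => hnn (q, k)) ?_
    exact h3.1 q
  have heq : ∑' q, bfun g q = Real.exp (∑' j, g j) := by
    rw [← tsum_congr hinner, key]
  exact heq ▸ hsum.hasSum

theorem bfun_le_exp {g : ℕ → ℝ} (hg : Summable fun j => ‖g j‖) (hg0 : g 0 = 0)
    (hpos : ∀ j, 0 ≤ g j) (q : ℕ) : bfun g q ≤ Real.exp (∑' j, g j) := by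
  have h := hasSum_bfun hg hg0
  rw [← h.tsum_eq]
  exact Summable.le_tsum h.summable q fun j _ => bfun_nonneg hpos j

noncomputable def acoef (α t : ℝ) (j : ℕ) : ℝ :=
  if j = 0 then 0 else α ^ 2 * (1 - (1 - 2 * t) ^ (j + 1)) / (2 * ((j : ℝ) + 1))

theorem compSum_acoef (α t : ℝ) (k m : ℕ) :
    compSum (acoef α t) k m = (α ^ 2 / 2) ^ k *
      ∑ c ∈ compositions k m, ∏ s, (1 - (1 - 2 * t) ^ (c s + 1)) / ((c s : ℝ) + 1) := by
  rw [compSum, compositions, Finset.mul_sum]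
  rw [← Finset.sum_filter_of_ne (p := fun c : Fin k → ℕ => ∀ s, 1 ≤ c s)]
  · refine Finset.sum_congr rfl fun c hc => ?_
    rw [Finset.mem_filter] at hc
    have h1 : ∀ i, acoef α t (c i)
        = (α ^ 2 / 2) * ((1 - (1 - 2 * t) ^ (c i + 1)) / ((c i : ℝ) + 1)) := by
      intro i
      have : c i ≠ 0 := by have := hc.2 i; omega
      rw [acoef, if_neg this]
      have h0 : ((c i : ℝ) + 1) ≠ 0 := by positivity
      field_simp
    rw [Finset.prod_congr rfl fun i _ => h1 i, Finset.prod_mul_distrib,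
      Finset.prod_const]
    simp
  · intro c _ hne
    by_contra hns
    push_neg at hns
    obtain ⟨i, hi⟩ := hns
    have hi0 : c i = 0 := by omega
    exact hne (Finset.prod_eq_zero (Finset.mem_univ i) (by rw [hi0]; simp [acoef]))

theorem bfun_acoef (α t : ℝ) (q : ℕ) :
    bfun (acoef α t) q = 2 ^ q * Gcoef α t q := by
  cases q with
  | zero =>
    simp [bfun, Gcoef, compSum_zero]
  | succ q =>
    rw [bfun, Finset.range_eq_Ico, Finset.sum_eq_sum_Ico_succ_bot (by omega),
      Finset.Ico_add_one_right_eq_Icc]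
    rw [compSum_zero, if_neg (by omega)]
    simp only [zero_div, zero_add]
    rw [Gcoef, Finset.mul_sum]
    refine Finset.sum_congr rfl fun k hk => ?_
    rw [compSum_acoef]
    have h2 : (2:ℝ) ^ (q + 1 + k) = 2 ^ (q+1) * 2 ^ k := by rw [pow_add]
    have h3 : α ^ (2 * k) = (α ^ 2) ^ k := by rw [pow_mul]
    rw [h2, h3, div_pow]
    have hf : (0:ℝ) < (Nat.factorial k : ℝ) := by positivity
    field_simp

theorem acoef_abs_le (α t : ℝ) (j : ℕ) :
    |acoef α t j| ≤ (α ^ 2 / 2 * max 1 |1 - 2 * t|) * (max 1 |1 - 2 * t|) ^ j := by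
  set B := max 1 |1 - 2 * t| with hBdef
  have hB1 : (1:ℝ) ≤ B := le_max_left _ _
  have hB0 : (0:ℝ) < B := lt_of_lt_of_le one_pos hB1
  cases j with
  | zero => rw [acoef, if_pos rfl]; simp; positivity
  | succ m =>
    rw [acoef, if_neg (by omega)]
    have hcast : (((m+1 : ℕ) : ℝ) + 1) = (m : ℝ) + 2 := by push_cast; ring
    have hden : (0:ℝ) < 2 * (((m+1 : ℕ) : ℝ) + 1) := by rw [hcast]; positivity
    rw [abs_div, abs_of_pos hden, abs_mul, abs_of_nonneg (sq_nonneg α)]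
    have habs : |1 - (1 - 2 * t) ^ (m + 1 + 1)| ≤ 2 * B ^ (m + 2) := by
      rw [sub_eq_add_neg]
      refine (abs_add_le _ _).trans ?_
      rw [abs_neg, abs_one, abs_pow]
      have h1 : (1:ℝ) ≤ B ^ (m + 2) := one_le_pow₀ hB1
      have h2 : |1 - 2 * t| ^ (m + 1 + 1) ≤ B ^ (m + 2) :=
        pow_le_pow_left₀ (abs_nonneg _) (le_max_right _ _) _
      linarith
    calc α ^ 2 * |1 - (1 - 2 * t) ^ (m + 1 + 1)| / (2 * (((m+1 : ℕ) : ℝ) + 1))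
        ≤ α ^ 2 * (2 * B ^ (m + 2)) / 4 := by
          refine div_le_div₀ (by positivity) (by gcongr) (by norm_num) ?_
          rw [hcast]
          have : (0:ℝ) ≤ (m:ℝ) := Nat.cast_nonneg m
          linarith
      _ = (α ^ 2 / 2 * B) * B ^ (m + 1) := by rw [pow_succ]; ring

theorem acoef_summable (α t : ℝ) {x : ℝ} (hx : max 1 |1 - 2 * t| * |x| ≤ 1 / 2) :
    Summable fun j => ‖acoef α t j * x ^ j‖ := by
  set B := max 1 |1 - 2 * t| with hBdef
  have hB0 : (0:ℝ) < B := lt_of_lt_of_le one_pos (le_max_left _ _)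
  refine Summable.of_nonneg_of_le (fun j => norm_nonneg _) (fun j => ?_)
    (((summable_geometric_of_lt_one (by positivity)
      (lt_of_le_of_lt hx (by norm_num))).mul_left (α ^ 2 / 2 * B)))
  rw [Real.norm_eq_abs, abs_mul, abs_pow]
  calc |acoef α t j| * |x| ^ j ≤ ((α ^ 2 / 2 * B) * B ^ j) * |x| ^ j := by
        have := acoef_abs_le α t j
        gcongr
    _ = (α ^ 2 / 2 * B) * (B * |x|) ^ j := by rw [mul_pow]; ring

theorem bfun_mul_pow (g : ℕ → ℝ) (x : ℝ) (q : ℕ) :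
    bfun (fun j => g j * x ^ j) q = bfun g q * x ^ q := by
  rw [bfun, bfun, Finset.sum_mul]
  exact Finset.sum_congr rfl fun k _ => by rw [compSum_mul_pow]; ring

theorem tail_est (α t : ℝ) (M : ℕ) : ∃ K > 0, ∀ x : ℝ,
    |x| ≤ (4 * max 1 |1 - 2 * t|)⁻¹ →
    |Real.exp (∑' j, acoef α t j * x ^ j)
      - ∑ q ∈ Finset.range (M + 1), bfun (acoef α t) q * x ^ q| ≤ K * |x| ^ (M + 1) := by
  set B := max 1 |1 - 2 * t| with hBdef
  have hB1 : (1:ℝ) ≤ B := le_max_left _ _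
  have hB0 : (0:ℝ) < B := lt_of_lt_of_le one_pos hB1
  set ρ : ℝ := (2 * B)⁻¹ with hρdef
  have hρ0 : 0 < ρ := by positivity
  have hρB : B * |ρ| ≤ 1 / 2 := by
    rw [abs_of_pos hρ0]
    have : B * ρ = 1 / 2 := by
      rw [hρdef]
      field_simp
    linarith
  have hgabs : Summable fun j => ‖acoef α t j * ρ ^ j‖ := acoef_summable α t hρB
  have hgabs2 : Summable fun j => ‖(|acoef α t j * ρ ^ j|)‖ := by
    refine hgabs.congr fun j => ?_
    rw [Real.norm_eq_abs, Real.norm_eq_abs, abs_abs]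
  set C : ℝ := Real.exp (∑' j, |acoef α t j * ρ ^ j|) with hCdef
  have hC0 : 0 < C := Real.exp_pos _
  refine ⟨2 * C * (2 * B) ^ (M + 1), by positivity, fun x hx => ?_⟩
  have hBx : B * |x| ≤ 1 / 2 := by
    have h4 : B * |x| ≤ B * (4 * B)⁻¹ := by gcongr
    have h5 : B * (4 * B)⁻¹ = 1 / 4 := by field_simp
    rw [h5] at h4
    linarith
  have h2Bx : 2 * B * |x| ≤ 1 / 2 := by
    have h4 : 2 * B * |x| ≤ 2 * B * (4 * B)⁻¹ := by gcongr
    have h5 : 2 * B * (4 * B)⁻¹ = 1 / 2 := by field_simp; ring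
    rw [h5] at h4
    exact h4
  have hg : Summable fun j => ‖acoef α t j * x ^ j‖ := acoef_summable α t hBx
  have hg0 : acoef α t 0 * x ^ 0 = 0 := by simp [acoef]
  have hHS : HasSum (fun q => bfun (acoef α t) q * x ^ q)
      (Real.exp (∑' j, acoef α t j * x ^ j)) :=
    (hasSum_bfun hg hg0).congr_fun fun q => (bfun_mul_pow (acoef α t) x q).symm
  -- coefficient bound
  have hbq : ∀ q, |bfun (acoef α t) q| ≤ C * (2 * B) ^ q := by
    intro q
    have hb1 : |bfun (acoef α t) q| * ρ ^ q
        = |bfun (fun j => acoef α t j * ρ ^ j) q| := by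
      rw [bfun_mul_pow, abs_mul, abs_of_nonneg (by positivity : (0:ℝ) ≤ ρ ^ q)]
    have hb2 : |bfun (fun j => acoef α t j * ρ ^ j) q|
        ≤ bfun (fun j => |acoef α t j * ρ ^ j|) q := bfun_abs_le _ q
    have hb3 : bfun (fun j => |acoef α t j * ρ ^ j|) q ≤ C := by
      rw [hCdef]
      exact bfun_le_exp hgabs2 (by simp [acoef]) (fun j => abs_nonneg _) q
    have hb4 : |bfun (acoef α t) q| * ρ ^ q ≤ C := by
      rw [hb1]; exact hb2.trans hb3
    have hρmul : ρ * (2 * B) = 1 := by rw [hρdef]; field_simp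
    calc |bfun (acoef α t) q| = (|bfun (acoef α t) q| * ρ ^ q) * (2 * B) ^ q := by
          rw [mul_assoc, ← mul_pow, hρmul, one_pow, mul_one]
      _ ≤ C * (2 * B) ^ q := by gcongr
  -- tail splitting
  have hsum2 : Summable (fun q => bfun (acoef α t) q * x ^ q) := hHS.summable
  have hsplit := Summable.sum_add_tsum_nat_add (f := fun q => bfun (acoef α t) q * x ^ q)
    (M + 1) hsum2
  rw [hHS.tsum_eq] at hsplit
  have hdiff : Real.exp (∑' j, acoef α t j * x ^ j)
      - ∑ q ∈ Finset.range (M + 1), bfun (acoef α t) q * x ^ q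
      = ∑' i, bfun (acoef α t) (i + (M + 1)) * x ^ (i + (M + 1)) := by
    linarith [hsplit]
  rw [hdiff]
  have hgeo : HasSum (fun i : ℕ => (C * (2 * B * |x|) ^ (M + 1)) * (1 / 2) ^ i)
      ((C * (2 * B * |x|) ^ (M + 1)) * 2) := by
    have h2 : HasSum (fun i : ℕ => ((1:ℝ) / 2) ^ i) 2 := by
      have := hasSum_geometric_of_lt_one (by norm_num : (0:ℝ) ≤ 1/2) (by norm_num)
      norm_num at this
      exact this
    exact h2.mul_left _
  have hbound : ∀ i : ℕ, ‖bfun (acoef α t) (i + (M + 1)) * x ^ (i + (M + 1))‖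
      ≤ (C * (2 * B * |x|) ^ (M + 1)) * (1 / 2) ^ i := by
    intro i
    rw [Real.norm_eq_abs, abs_mul, abs_pow]
    calc |bfun (acoef α t) (i + (M + 1))| * |x| ^ (i + (M + 1))
        ≤ (C * (2 * B) ^ (i + (M + 1))) * |x| ^ (i + (M + 1)) := by
          gcongr
          exact hbq _
      _ = C * (2 * B * |x|) ^ (M + 1) * (2 * B * |x|) ^ i := by
          rw [mul_pow (2 * B) |x|, pow_add, pow_add]
          ring
      _ ≤ C * (2 * B * |x|) ^ (M + 1) * (1 / 2) ^ i := by
          have hp : (2 * B * |x|) ^ i ≤ (1 / 2) ^ i :=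
            pow_le_pow_left₀ (by positivity) h2Bx i
          have hnn : (0:ℝ) ≤ C * (2 * B * |x|) ^ (M + 1) := by positivity
          exact mul_le_mul_of_nonneg_left hp hnn
  have := tsum_of_norm_bounded hgeo hbound
  rw [Real.norm_eq_abs] at this
  refine this.trans (le_of_eq ?_)
  rw [mul_pow (2 * B) |x|]
  ring

theorem pow_eq_exp (α t : ℝ) (hα : 0 < α) (N : ℕ) (hN : 1 ≤ N)
    (hx : max 1 |1 - 2 * t| * |α ^ 2 / (2 * (N:ℝ))| ≤ 1 / 4) :
    (1 + 2 * α ^ 2 * t / (2 * (N:ℝ) - α ^ 2)) ^ N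
      = Real.exp (α ^ 2 * t)
        * Real.exp (∑' j, acoef α t j * (α ^ 2 / (2 * (N:ℝ))) ^ j) := by
  have hN0 : (0:ℝ) < N := by exact_mod_cast hN
  obtain ⟨x, hxdef⟩ : ∃ x : ℝ, x = α ^ 2 / (2 * (N:ℝ)) := ⟨_, rfl⟩
  rw [← hxdef] at hx ⊢
  obtain ⟨s, hsdef⟩ : ∃ s : ℝ, s = 1 - 2 * t := ⟨_, rfl⟩
  rw [← hsdef] at hx
  have hacoef : ∀ j : ℕ, acoef α t j
      = if j = 0 then 0 else α ^ 2 * (1 - s ^ (j + 1)) / (2 * ((j : ℝ) + 1)) := by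
    intro j; rw [acoef, hsdef]
  have hx0 : 0 < x := by rw [hxdef]; positivity
  have hB1 : (1:ℝ) ≤ max 1 |s| := le_max_left _ _
  have hx4 : x ≤ 1 / 4 := by
    have h1 : 1 * |x| ≤ max 1 |s| * |x| :=
      mul_le_mul_of_nonneg_right hB1 (abs_nonneg _)
    rw [one_mul] at h1
    rw [abs_of_pos hx0] at h1 hx
    linarith
  have hsx4 : |s * x| ≤ 1 / 4 := by
    rw [abs_mul, abs_of_pos hx0]
    calc |s| * x ≤ max 1 |s| * x :=
          mul_le_mul_of_nonneg_right (le_max_right _ _) hx0.le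
      _ ≤ 1 / 4 := by rw [abs_of_pos hx0] at hx; exact hx
  have h1x : 0 < 1 - x := by linarith
  have h1sx : 0 < 1 - s * x := by
    have h1 := le_abs_self (s * x)
    linarith
  have hNx : (N:ℝ) * x = α ^ 2 / 2 := by
    rw [hxdef]; field_simp
  have h2N : 2 * (N:ℝ) - α ^ 2 = 2 * (N:ℝ) * (1 - x) := by
    rw [hxdef]; field_simp
  have e1 : 2 * α ^ 2 * t / (2 * (N:ℝ) - α ^ 2) = (2 * t * x) / (1 - x) := by
    rw [h2N, show 2 * α ^ 2 * t = (2 * (N:ℝ)) * (2 * t * x) by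
      rw [show α ^ 2 = 2 * ((N:ℝ) * x) by rw [hNx]; ring]; ring]
    exact mul_div_mul_left _ _ (by positivity)
  have hbase : 1 + 2 * α ^ 2 * t / (2 * (N:ℝ) - α ^ 2) = (1 - s * x) / (1 - x) := by
    rw [e1, hsdef]
    field_simp
    ring
  rw [hbase]
  have hbasepos : 0 < (1 - s * x) / (1 - x) := div_pos h1sx h1x
  have hlog : ((1 - s * x) / (1 - x)) ^ N
      = Real.exp ((N:ℝ) * Real.log ((1 - s * x) / (1 - x))) := by
    rw [← Real.log_pow, Real.exp_log (pow_pos hbasepos N)]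
  rw [hlog]
  have hlogdiv : Real.log ((1 - s * x) / (1 - x))
      = Real.log (1 - s * x) - Real.log (1 - x) :=
    Real.log_div (ne_of_gt h1sx) (ne_of_gt h1x)
  have hL1 : HasSum (fun n : ℕ => x ^ (n + 1) / (n + 1)) (-Real.log (1 - x)) :=
    Real.hasSum_pow_div_log_of_abs_lt_one (by rw [abs_of_pos hx0]; linarith)
  have hL2 : HasSum (fun n : ℕ => (s * x) ^ (n + 1) / (n + 1)) (-Real.log (1 - s * x)) :=
    Real.hasSum_pow_div_log_of_abs_lt_one (by linarith [hsx4])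
  have hsub := (hL1.sub hL2).mul_left (N:ℝ)
  have hfun : ∀ n : ℕ, (N:ℝ) * (x ^ (n + 1) / ((n:ℝ) + 1) - (s * x) ^ (n + 1) / ((n:ℝ) + 1))
      = acoef α t n * x ^ n + (if n = 0 then α ^ 2 * t else 0) := by
    intro n
    have hα2 : α ^ 2 = 2 * ((N:ℝ) * x) := by rw [hNx]; ring
    rw [hacoef n]
    cases n with
    | zero =>
      simp only [if_pos rfl, zero_mul, zero_add]
      push_cast
      rw [hα2, hsdef]
      ring
    | succ m =>
      rw [if_neg (by omega), if_neg (by omega), add_zero, hα2]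
      have hden : ((m:ℝ) + 1 + 1) ≠ 0 := by positivity
      push_cast
      field_simp
      ring
  have hHS : HasSum (fun n => acoef α t n * x ^ n + (if n = 0 then α ^ 2 * t else 0))
      ((N:ℝ) * (-Real.log (1 - x) - -Real.log (1 - s * x))) := by
    refine hsub.congr_fun fun n => ?_
    exact (hfun n).symm
  have hIte : HasSum (fun n : ℕ => if n = 0 then α ^ 2 * t else 0) (α ^ 2 * t) :=
    hasSum_ite_eq 0 (α ^ 2 * t)
  have hY := hHS.sub hIte
  simp only [add_sub_cancel_right] at hY
  rw [hY.tsum_eq, ← Real.exp_add, hlogdiv]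
  ring_nf

theorem asymp_expansion_weak (α t : ℝ) (hα : 0 < α) (M : ℕ) :
    (fun N : ℕ =>
        (1 + 2 * α ^ 2 * t / (2 * N - α ^ 2)) ^ N -
          Real.exp (α ^ 2 * t) *
            ∑ q ∈ Finset.range (M + 1), Gcoef α t q * (α ^ 2 / N) ^ q)
      =O[atTop] fun N : ℕ => ((N : ℝ) ^ (M + 1))⁻¹ := by
  set B := max 1 |1 - 2 * t| with hBdef
  have hB1 : (1:ℝ) ≤ B := le_max_left _ _
  have hB0 : (0:ℝ) < B := lt_of_lt_of_le one_pos hB1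
  obtain ⟨K, hK0, hKest⟩ := tail_est α t M
  rw [isBigO_iff]
  refine ⟨Real.exp (α ^ 2 * t) * K * (α ^ 2 / 2) ^ (M + 1), ?_⟩
  obtain ⟨N₀, hN₀⟩ := exists_nat_ge (max 1 (2 * B * α ^ 2))
  filter_upwards [eventually_ge_atTop (N₀ + 1)] with N hNge
  have hN1 : 1 ≤ N := by omega
  have hN0 : (0:ℝ) < N := by exact_mod_cast hN1
  have hNR : max 1 (2 * B * α ^ 2) ≤ (N:ℝ) := by
    refine hN₀.trans ?_
    exact_mod_cast Nat.le_of_lt (by omega)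
  have hN1R : (1:ℝ) ≤ (N:ℝ) := le_trans (le_max_left _ _) hNR
  have hN2R : 2 * B * α ^ 2 ≤ (N:ℝ) := le_trans (le_max_right _ _) hNR
  -- the small parameter
  have hx0 : 0 < α ^ 2 / (2 * (N:ℝ)) := by positivity
  have hxB : B * |α ^ 2 / (2 * (N:ℝ))| ≤ 1 / 4 := by
    rw [abs_of_pos hx0, show B * (α ^ 2 / (2 * (N:ℝ))) = (B * α ^ 2) / (2 * (N:ℝ)) by ring,
      div_le_iff₀ (by positivity)]
    nlinarith
  have hxtail : |α ^ 2 / (2 * (N:ℝ))| ≤ (4 * B)⁻¹ := by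
    rw [inv_eq_one_div, le_div_iff₀ (by positivity)]
    nlinarith [abs_nonneg (α ^ 2 / (2 * (N:ℝ)))]
  rw [pow_eq_exp α t hα N hN1 hxB]
  have hGb : ∀ q ∈ Finset.range (M+1),
      Gcoef α t q * (α ^ 2 / (N:ℝ)) ^ q
        = bfun (acoef α t) q * (α ^ 2 / (2 * (N:ℝ))) ^ q := by
    intro q _
    rw [bfun_acoef]
    rw [show (α ^ 2 / (N:ℝ)) = 2 * (α ^ 2 / (2 * (N:ℝ))) by field_simp, mul_pow]
    ring
  rw [Finset.sum_congr rfl hGb, ← mul_sub, Real.norm_eq_abs, abs_mul,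
    abs_of_pos (Real.exp_pos _)]
  have hest := hKest _ hxtail
  calc Real.exp (α ^ 2 * t) * |Real.exp (∑' j, acoef α t j * (α ^ 2 / (2 * (N:ℝ))) ^ j)
        - ∑ q ∈ Finset.range (M + 1), bfun (acoef α t) q * (α ^ 2 / (2 * (N:ℝ))) ^ q|
      ≤ Real.exp (α ^ 2 * t) * (K * |α ^ 2 / (2 * (N:ℝ))| ^ (M + 1)) :=
        mul_le_mul_of_nonneg_left hest (Real.exp_pos _).le
    _ = Real.exp (α ^ 2 * t) * K * (α ^ 2 / 2) ^ (M + 1) * ‖((N:ℝ) ^ (M + 1))⁻¹‖ := by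
        rw [show |α ^ 2 / (2 * (N:ℝ))| = (α ^ 2 / 2) * (N:ℝ)⁻¹ by
          rw [abs_of_pos hx0]; field_simp,
          mul_pow, Real.norm_eq_abs,
          abs_of_pos (by positivity : (0:ℝ) < ((N:ℝ) ^ (M + 1))⁻¹), ← inv_pow]
        ring
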